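/- arXiv:2109.13697 — 8 statements merged into one kernel-verified Lean document; each statement's English description precedes it below -/
import Mathlib

section
/- Let q be a prime power, χ_1 the canonical additive character of F_q, and φ_i, φ_j multiplicative characters of F_q indexed as φ_i(α^t) = e^{2πi·it/(q-1)} for a fixed primitive element α. Suppose q−1 = NK with 1 < K < q−1. Define for each i the K×N array with (k,t)-entry χ_1(α^{k+Kt})·φ_i(α^{k+Kt}). Then for i = j and τ ∈ [1,N−1], the periodic correlation magnitude |R(τ)| = 1. -/
/-- The `(k,t)` entry `χ₁(α^{k+Kt}) φ_i(α^{k+Kt})` of the array `C^i`, where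
`χ₁` is the canonical additive character of `F` (of characteristic `p`) and
`φ_i(α^t) = e^{2πi·i·t/(q-1)}` is a multiplicative character. -/
noncomputable def qcssEntry (p : ℕ) (F : Type) [Field F] [Fintype F]
    [Algebra (ZMod p) F] (α : F) (i m : ℕ) : ℂ :=
  Complex.exp (2 * Real.pi * Complex.I *
      (((Algebra.trace (ZMod p) F (α ^ m)).val : ℕ) : ℂ) / (p : ℂ)) *
  Complex.exp (2 * Real.pi * Complex.I * ((i * m : ℕ) : ℂ) /
      (((Fintype.card F - 1 : ℕ)) : ℂ))

open Complex Finset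

section Aux

variable (p : ℕ) [Fact p.Prime] (F : Type) [Field F] [Fintype F]
    [Algebra (ZMod p) F] [CharP F p]

/-- The canonical additive character of `F`. -/
noncomputable def qcssPsi : AddChar F ℂ :=
  ZMod.stdAddChar.compAddMonoidHom (Algebra.trace (ZMod p) F).toAddMonoidHom

lemma qcssPsi_apply (x : F) :
    qcssPsi p F x = Complex.exp (2 * Real.pi * Complex.I *
      (((Algebra.trace (ZMod p) F x).val : ℕ) : ℂ) / (p : ℂ)) := by
  rw [qcssPsi, AddChar.compAddMonoidHom_apply]
  have h : (Algebra.trace (ZMod p) F).toAddMonoidHom x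
      = (((Algebra.trace (ZMod p) F x).val : ℤ) : ZMod p) := by
    rw [Int.cast_natCast, ZMod.natCast_val, ZMod.cast_id]; rfl
  rw [h, ZMod.stdAddChar_coe]
  push_cast
  ring_nf

lemma qcssPsi_conj (x : F) :
    (starRingEnd ℂ) (qcssPsi p F x) = qcssPsi p F (-x) := by
  have hR : 0 < ringChar F := by
    rw [ringChar.eq F p]; exact (Fact.out : p.Prime).pos
  rw [AddChar.starComp_apply hR, AddChar.inv_apply]

lemma qcss_exists_trace_ne (a : F) (ha : a ≠ 0) :
    ∃ b : F, Algebra.trace (ZMod p) F (a * b) ≠ 0 := by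
  have htr := (traceForm_nondegenerate (ZMod p) F).1 a
  simp_rw [Algebra.traceForm_apply] at htr
  by_contra! hf
  exact ha (htr hf)

lemma qcssEntry_eq (α : F) (i m : ℕ) :
    qcssEntry p F α i m = qcssPsi p F (α ^ m) *
      Complex.exp (2 * Real.pi * Complex.I * ((i * m : ℕ) : ℂ) /
        (((Fintype.card F - 1 : ℕ)) : ℂ)) := by
  rw [qcssEntry, qcssPsi_apply]

lemma qcssEntry_periodic (α : F) (hα : orderOf α = Fintype.card F - 1)
    (hQ : Fintype.card F - 1 ≠ 0) (i m d : ℕ) :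
    qcssEntry p F α i (m + (Fintype.card F - 1) * d) = qcssEntry p F α i m := by
  set Q := Fintype.card F - 1 with hQdef
  have hpow : α ^ (m + Q * d) = α ^ m := by
    have h1 : α ^ Q = 1 := by rw [← hα]; exact pow_orderOf_eq_one α
    rw [pow_add, pow_mul, h1, one_pow, mul_one]
  rw [qcssEntry, qcssEntry, hpow]
  congr 1
  have hQC : (Q : ℂ) ≠ 0 := Nat.cast_ne_zero.mpr hQ
  have h1 : (2 * (Real.pi : ℂ) * Complex.I * ((i * (m + Q * d) : ℕ) : ℂ) / (Q : ℂ))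
      = 2 * (Real.pi : ℂ) * Complex.I * ((i * m : ℕ) : ℂ) / (Q : ℂ)
        + ((i * d : ℕ) : ℤ) * (2 * (Real.pi : ℂ) * Complex.I) := by
    push_cast
    field_simp
  rw [h1, Complex.exp_add, Complex.exp_int_mul_two_pi_mul_I, mul_one]

lemma qcssTerm (α : F) (hQ : Fintype.card F - 1 ≠ 0) (i m s : ℕ) :
    qcssEntry p F α i m * (starRingEnd ℂ) (qcssEntry p F α i (m + s)) =
      ((qcssPsi p F).mulShift (1 - α ^ s)) (α ^ m) *
        Complex.exp (-(2 * Real.pi * Complex.I * ((i * s : ℕ) : ℂ) /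
          (((Fintype.card F - 1 : ℕ)) : ℂ))) := by
  set Q := Fintype.card F - 1 with hQdef
  have hQC : (Q : ℂ) ≠ 0 := Nat.cast_ne_zero.mpr hQ
  rw [qcssEntry_eq, qcssEntry_eq, map_mul, mul_mul_mul_comm]
  congr 1
  · rw [qcssPsi_conj, AddChar.mulShift_apply, ← AddChar.map_add_eq_mul]
    congr 1
    rw [pow_add]
    ring
  · rw [← Complex.exp_conj]
    have hc : (starRingEnd ℂ) (2 * (Real.pi : ℂ) * Complex.I * ((i * (m + s) : ℕ) : ℂ) / (Q : ℂ))
        = -(2 * (Real.pi : ℂ) * Complex.I * ((i * (m + s) : ℕ) : ℂ) / (Q : ℂ)) := by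
      simp [map_div₀, map_mul, Complex.conj_I, map_ofNat]
      ring
    rw [hc, ← Complex.exp_add]
    congr 1
    have hsplit : ((i * (m + s) : ℕ) : ℂ) = ((i * m : ℕ) : ℂ) + ((i * s : ℕ) : ℂ) := by
      push_cast; ring
    have key : ∀ (A B C q : ℂ), A + -B = -C → A / q + -(B / q) = -(C / q) := by
      intro A B C q h
      rw [← neg_div, ← add_div, h, neg_div]
    apply key
    linear_combination -(2 * (Real.pi : ℂ) * Complex.I) * hsplit

lemma qcss_sum_double (K N : ℕ) (hK : 0 < K) (f : ℕ → ℂ) :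
    ∑ k ∈ Finset.range K, ∑ t ∈ Finset.range N, f (k + K * t)
      = ∑ m ∈ Finset.range (K * N), f m := by
  rw [← Finset.sum_product']
  refine Finset.sum_nbij' (fun q ↦ q.1 + K * q.2) (fun m ↦ (m % K, m / K)) ?_ ?_ ?_ ?_ ?_
  · rintro ⟨k, t⟩ hkt
    simp only [Finset.mem_product, Finset.mem_range] at hkt
    simp only [Finset.mem_range]
    calc k + K * t < K + K * t := by omega
      _ = K * (t + 1) := by ring
      _ ≤ K * N := Nat.mul_le_mul_left K hkt.2
  · intro m hm
    simp only [Finset.mem_range] at hm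
    simp only [Finset.mem_product, Finset.mem_range]
    exact ⟨Nat.mod_lt _ hK, Nat.div_lt_of_lt_mul hm⟩
  · rintro ⟨k, t⟩ hkt
    simp only [Finset.mem_product, Finset.mem_range] at hkt
    have h1 : (k + K * t) % K = k := by
      rw [Nat.add_mul_mod_self_left, Nat.mod_eq_of_lt hkt.1]
    have h2 : (k + K * t) / K = t := by
      rw [Nat.add_mul_div_left _ _ hK, Nat.div_eq_of_lt hkt.1, zero_add]
    simp [h1, h2]
  · intro m _
    simp [Nat.mod_add_div]
  · intro q _
    rfl

lemma qcss_sum_pow [DecidableEq F] (α : F) (hα : orderOf α = Fintype.card F - 1)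
    (hQ : 0 < Fintype.card F - 1) (g : F → ℂ) :
    ∑ m ∈ Finset.range (Fintype.card F - 1), g (α ^ m)
      = ∑ x ∈ (Finset.univ : Finset F).erase 0, g x := by
  set Q := Fintype.card F - 1 with hQdef
  have hα0 : α ≠ 0 := by
    intro h
    have h1 : α ^ Q = 1 := by rw [← hα]; exact pow_orderOf_eq_one α
    rw [h, zero_pow hQ.ne'] at h1
    exact zero_ne_one h1
  set u : Fˣ := Units.mk0 α hα0 with hu
  have hords : orderOf u = Q := by
    rw [← orderOf_units]; exact hα
  refine Finset.sum_bij (fun m _ ↦ α ^ m) ?_ ?_ ?_ ?_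
  · intro m hm
    simp only [Finset.mem_erase, Finset.mem_univ, and_true]
    exact pow_ne_zero _ hα0
  · intro a ha b hb hab
    simp only [Finset.mem_range] at ha hb
    have : u ^ a = u ^ b := by
      ext; exact hab
    have := pow_injOn_Iio_orderOf (x := u) (by rwa [hords]) (by rwa [hords]) this
    exact this
  · intro x hx
    simp only [Finset.mem_erase, Finset.mem_univ, and_true] at hx
    set v : Fˣ := Units.mk0 x hx with hv
    have hcard : orderOf u = Fintype.card Fˣ := by
      rw [hords, Fintype.card_units]
    have hv_mem : v ∈ Subgroup.zpowers u := by
      have htop : Subgroup.zpowers u = ⊤ := by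
        apply Subgroup.eq_top_of_card_eq
        rw [Nat.card_zpowers, hcard, Nat.card_eq_fintype_card]
      rw [htop]; trivial
    obtain ⟨z, hz⟩ := Subgroup.mem_zpowers_iff.mp hv_mem
    refine ⟨(z % (Q : ℤ)).toNat, ?_, ?_⟩
    · simp only [Finset.mem_range]
      have h1 : 0 ≤ z % (Q : ℤ) := Int.emod_nonneg z (by exact_mod_cast hQ.ne')
      have h2 : z % (Q : ℤ) < Q := Int.emod_lt_of_pos z (by exact_mod_cast hQ)
      omega
    · have : u ^ ((z % (Q : ℤ)).toNat) = v := by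
        have h1 : 0 ≤ z % (Q : ℤ) := Int.emod_nonneg z (by exact_mod_cast hQ.ne')
        rw [← zpow_natCast, Int.toNat_of_nonneg h1, ← hords, zpow_mod_orderOf, hz]
      calc α ^ ((z % (Q : ℤ)).toNat) = ((u ^ ((z % (Q : ℤ)).toNat) : Fˣ) : F) := rfl
        _ = ((v : Fˣ) : F) := by rw [this]
        _ = x := rfl
  · intro m _
    rfl

end Aux


/-- Autocorrelation case: for `i = j` and `τ ∈ [1, N-1]`, the periodic correlation
magnitude of the array `C^i` with itself equals `1`. -/
theorem qcss_autocorrelation_abs_eq_one (p : ℕ) [Fact p.Prime] (F : Type) [Field F]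
    [Fintype F] [Algebra (ZMod p) F] [CharP F p]
    (α : F) (hα : orderOf α = Fintype.card F - 1)
    (N K : ℕ) (hNK : Fintype.card F - 1 = N * K) (hK1 : 1 < K)
    (hK2 : K < Fintype.card F - 1)
    (i τ : ℕ) (hi : i < Fintype.card F - 1) (hτ1 : 1 ≤ τ) (hτ2 : τ < N) :
    ‖∑ k ∈ Finset.range K, ∑ t ∈ Finset.range N,
      qcssEntry p F α i (k + K * t) *
        (starRingEnd ℂ) (qcssEntry p F α i (k + K * ((t + τ) % N)))‖ = 1 := by
  classical
  set Q := Fintype.card F - 1 with hQdef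
  have hQpos : 0 < Q := lt_trans (by omega) hK2
  have hQ : Q ≠ 0 := hQpos.ne'
  set β : F := α ^ (K * τ) with hβ
  set ψ' : AddChar F ℂ := (qcssPsi p F).mulShift (1 - β) with hψ'
  set c : ℂ := Complex.exp (-(2 * Real.pi * Complex.I * ((i * (K * τ) : ℕ) : ℂ) / (Q : ℂ)))
    with hc
  -- step 1: rewrite each term
  have hterm : ∀ k ∈ Finset.range K, ∀ t ∈ Finset.range N,
      qcssEntry p F α i (k + K * t) *
        (starRingEnd ℂ) (qcssEntry p F α i (k + K * ((t + τ) % N)))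
      = ψ' (α ^ (k + K * t)) * c := by
    intro k _ t _
    have hper : qcssEntry p F α i (k + K * ((t + τ) % N))
        = qcssEntry p F α i ((k + K * t) + K * τ) := by
      have harith : (k + K * ((t + τ) % N)) + Q * ((t + τ) / N) = (k + K * t) + K * τ := by
        have h := Nat.div_add_mod (t + τ) N
        calc (k + K * ((t + τ) % N)) + Q * ((t + τ) / N)
            = k + K * (N * ((t + τ) / N) + (t + τ) % N) := by rw [hNK]; ring
          _ = k + K * (t + τ) := by rw [h]
          _ = (k + K * t) + K * τ := by ring
      rw [← harith, qcssEntry_periodic p F α hα hQ]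
    rw [hper, qcssTerm p F α hQ]
  rw [Finset.sum_congr rfl (fun k hk ↦ Finset.sum_congr rfl (fun t ht ↦ hterm k hk t ht))]
  -- step 2: factor out c and reindex
  simp_rw [← Finset.sum_mul]
  rw [qcss_sum_double K N (by omega) (fun m ↦ ψ' (α ^ m))]
  have hKN : K * N = Q := (mul_comm K N).trans hNK.symm
  rw [hKN, qcss_sum_pow F α hα hQpos]
  -- step 3: the character sum is -1
  have hβne : (1 : F) - β ≠ 0 := by
    intro h
    have hβ1 : β = 1 := by linear_combination -h
    have hdvd : orderOf α ∣ K * τ := orderOf_dvd_of_pow_eq_one hβ1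
    rw [hα] at hdvd
    have h1 : K * τ ≠ 0 := by positivity
    have h2 : Q ≤ K * τ := Nat.le_of_dvd (Nat.pos_of_ne_zero h1) hdvd
    have h3 : K * τ < Q := by
      have h4 : K * τ + K ≤ K * N := by
        calc K * τ + K = K * (τ + 1) := by ring
          _ ≤ K * N := Nat.mul_le_mul_left K hτ2
      rw [hKN] at h4
      omega
    omega
  have hψ'ne : ψ' ≠ 0 := by
    rw [AddChar.ne_zero_iff]
    obtain ⟨b, hb⟩ := qcss_exists_trace_ne p F (1 - β) hβne
    refine ⟨b, ?_⟩
    rw [hψ', AddChar.mulShift_apply, qcssPsi, AddChar.compAddMonoidHom_apply]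
    intro hcontra
    apply hb
    have := ZMod.injective_stdAddChar (N := p)
    have h0 : ZMod.stdAddChar ((Algebra.trace (ZMod p) F).toAddMonoidHom ((1 - β) * b))
        = ZMod.stdAddChar (0 : ZMod p) := by
      rw [hcontra, AddChar.map_zero_eq_one]
    exact this h0
  have hsum0 : ∑ x : F, ψ' x = 0 := AddChar.sum_eq_zero_iff_ne_zero.mpr hψ'ne
  have hsum : ∑ x ∈ (Finset.univ : Finset F).erase 0, ψ' x = -1 := by
    have := Finset.add_sum_erase Finset.univ (fun x ↦ ψ' x) (Finset.mem_univ (0 : F))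
    rw [hsum0] at this
    have h1 : ψ' (0 : F) = 1 := AddChar.map_zero_eq_one ψ'
    linear_combination this - h1
  rw [hsum, neg_one_mul, norm_neg, hc, Complex.norm_exp]
  have hz : (-(2 * (Real.pi:ℂ) * Complex.I * ((i * (K * τ) : ℕ) : ℂ) / ((Q : ℕ) : ℂ))).re = 0 := by
    simp [Complex.div_re, Complex.mul_re, Complex.mul_im, Complex.normSq_apply]
  rw [hz, Real.exp_zero]
end

section
/- Let N > 1 be odd, μ its smallest prime factor, ξ_N = e^{2πi/N}, and ρ : [0,N−1] → [0,N−1] a bijection. For a ∈ [1,μ−1], b ∈ [0,N−1], define the N×N array C^{a,b} with (i,j)-entry ξ_N^{(aρ(i)+b)j}. Then for any (a,b) and any shift τ ∈ [1,N−1], the periodic autocorrelation R_{C^{a,b},C^{a,b}}(τ) = Σ_{i=0}^{N-1} Σ_{j=0}^{N-1} ξ_N^{(aρ(i)+b)j − (aρ(i)+b)(j+τ)} equals 0. -/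
/-- Autocorrelation of `C^{a,b}` with entries `ξ_N^{(aρ(i)+b)j}` at a nonzero shift
`τ` vanishes. -/
theorem qcss_flexible_autocorrelation (N : ℕ) (hN : 1 < N) (hodd : Odd N)
    (ρ : ℕ → ℕ) (hρ : Set.BijOn ρ (Set.Iio N) (Set.Iio N))
    (a b τ : ℕ) (ha1 : 1 ≤ a) (ha2 : a < N.minFac) (hb : b < N)
    (hτ1 : 1 ≤ τ) (hτ2 : τ < N) :
    ∑ i ∈ Finset.range N, ∑ j ∈ Finset.range N,
      Complex.exp (2 * Real.pi * Complex.I / N) ^ ((a * ρ i + b) * j) *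
        (starRingEnd ℂ)
          (Complex.exp (2 * Real.pi * Complex.I / N) ^ ((a * ρ i + b) * ((j + τ) % N)))
      = 0 := by
  set ζ : ℂ := Complex.exp (2 * Real.pi * Complex.I / N) with hζdef
  have hN0 : (N : ℕ) ≠ 0 := by omega
  have hζ : IsPrimitiveRoot ζ N := Complex.isPrimitiveRoot_exp N hN0
  have hζ1 : ζ ^ N = 1 := hζ.pow_eq_one
  have hζne : ζ ≠ 0 := Complex.exp_ne_zero _
  -- conjugation is inversion
  have hconj : (starRingEnd ℂ) ζ = ζ⁻¹ := by
    rw [hζdef, ← Complex.exp_conj, ← Complex.exp_neg]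
    congr 1
    simp [map_div₀, Complex.conj_I, map_ofNat]
    ring
  -- pow only depends on exponent mod N
  have hmod : ∀ m : ℕ, ζ ^ m = ζ ^ (m % N) := by
    intro m
    conv_lhs => rw [← Nat.div_add_mod m N]
    rw [pow_add, pow_mul, hζ1, one_pow, one_mul]
  -- simplify each term
  have hterm : ∀ c j : ℕ, ζ ^ (c * j) * (starRingEnd ℂ) (ζ ^ (c * ((j + τ) % N)))
      = (ζ ^ (c * τ))⁻¹ := by
    intro c j
    have h1 : ζ ^ (c * ((j + τ) % N)) = ζ ^ (c * (j + τ)) := by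
      rw [hmod (c * ((j + τ) % N)), hmod (c * (j + τ))]
      congr 1
      exact Nat.ModEq.mul_left c (Nat.mod_modEq (j + τ) N)
    rw [map_pow, hconj, inv_pow, h1, mul_add, pow_add, mul_inv]
    field_simp
  simp only [hterm, Finset.sum_const, Finset.card_range, nsmul_eq_mul]
  rw [← Finset.mul_sum]
  -- the coprimality argument
  have hcop : Nat.Coprime a N := by
    by_contra hc
    obtain ⟨p, hp, hpa, hpN⟩ := Nat.Prime.not_coprime_iff_dvd.mp hc
    have h1 : N.minFac ≤ p := Nat.minFac_le_of_dvd hp.two_le hpN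
    have h2 : p ≤ a := Nat.le_of_dvd (by omega) hpa
    omega
  have hndvd : ¬ (N ∣ a * τ) := by
    intro h
    have hdτ := (Nat.Coprime.symm hcop).dvd_of_dvd_mul_left h
    exact absurd (Nat.le_of_dvd (by omega) hdτ) (by omega)
  set w : ℂ := (ζ ^ (a * τ))⁻¹ with hw
  have hw1 : w ≠ 1 := by
    simp only [hw, ne_eq, inv_eq_one]
    rw [hζ.pow_eq_one_iff_dvd]
    exact hndvd
  have hwN : w ^ N = 1 := by
    rw [hw, inv_pow, ← pow_mul, mul_comm (a * τ) N, pow_mul, hζ1, one_pow, inv_one]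
  have hsplit : ∀ i : ℕ, (ζ ^ ((a * ρ i + b) * τ))⁻¹ = (ζ ^ (b * τ))⁻¹ * w ^ ρ i := by
    intro i
    rw [hw, inv_pow, ← pow_mul, ← mul_inv, ← pow_add]
    congr 1
    ring
  simp only [hsplit]
  rw [← Finset.mul_sum]
  have hre : ∑ i ∈ Finset.range N, w ^ ρ i = ∑ x ∈ Finset.range N, w ^ x := by
    apply Finset.sum_bij (fun i _ => ρ i)
    · intro i hi
      simp only [Finset.mem_range] at *
      exact hρ.mapsTo hi
    · intro i hi j hj hij
      simp only [Finset.mem_range] at hi hj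
      exact hρ.injOn hi hj hij
    · intro x hx
      simp only [Finset.mem_range] at hx
      obtain ⟨i, hi, hix⟩ := hρ.surjOn hx
      exact ⟨i, Finset.mem_range.mpr hi, hix⟩
    · intro i _
      rfl
  rw [hre, geom_sum_eq hw1, hwN, sub_self, zero_div, mul_zero, mul_zero]
end

section
/- Let N > 1 be odd, μ its smallest prime factor, ξ_N = e^{2πi/N}, ρ a bijection of [0,N−1]. For a ∈ [1,μ−1] and b_1 ≠ b_2 in [0,N−1], the arrays C^{a,b_1}, C^{a,b_2} with entries ξ_N^{(aρ(i)+b)j} satisfy R_{C^{a,b_1},C^{a,b_2}}(τ) = 0 for every τ ∈ [0,N−1]. -/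
/-- Cross-correlation of `C^{a,b₁}` and `C^{a,b₂}` (same `a`, different `b`) vanishes
at every shift `τ`. -/
theorem qcss_flexible_cross_same_a (N : ℕ) (hN : 1 < N) (hodd : Odd N)
    (ρ : ℕ → ℕ) (hρ : Set.BijOn ρ (Set.Iio N) (Set.Iio N))
    (a b₁ b₂ τ : ℕ) (ha1 : 1 ≤ a) (ha2 : a < N.minFac)
    (hb₁ : b₁ < N) (hb₂ : b₂ < N) (hbne : b₁ ≠ b₂) (hτ : τ < N) :
    ∑ i ∈ Finset.range N, ∑ j ∈ Finset.range N,
      Complex.exp (2 * Real.pi * Complex.I / N) ^ ((a * ρ i + b₁) * j) *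
        (starRingEnd ℂ)
          (Complex.exp (2 * Real.pi * Complex.I / N) ^ ((a * ρ i + b₂) * ((j + τ) % N)))
      = 0 := by
  set ξ : ℂ := Complex.exp (2 * Real.pi * Complex.I / N) with hξ
  have hprim : IsPrimitiveRoot ξ N := by
    have h := Complex.isPrimitiveRoot_exp N (by omega)
    convert h using 2
  have hξ0 : ξ ≠ 0 := Complex.exp_ne_zero _
  have hξN : ξ ^ (N : ℤ) = 1 := by
    rw [zpow_natCast]; exact hprim.pow_eq_one
  have hconjξ : (starRingEnd ℂ) ξ = ξ⁻¹ := by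
    rw [hξ, ← Complex.exp_conj, ← Complex.exp_neg]
    congr 1
    simp [map_div₀, Complex.conj_I, map_ofNat]
    ring
  have hconj : ∀ m : ℕ, (starRingEnd ℂ) (ξ ^ m) = ξ ^ (-(m : ℤ)) := by
    intro m
    rw [map_pow, hconjξ, zpow_neg, zpow_natCast, inv_pow]
  have hmod : ∀ x y : ℤ, (N : ℤ) ∣ x - y → ξ ^ x = ξ ^ y := by
    rintro x y ⟨k, hk⟩
    have hx : x = y + N * k := by linarith
    rw [hx, zpow_add₀ hξ0, zpow_mul, hξN, one_zpow, mul_one]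
  set w : ℂ := ξ ^ ((b₁ : ℤ) - (b₂ : ℤ)) with hw
  have hw1 : w ≠ 1 := by
    intro h
    have hdvd : (N : ℤ) ∣ (b₁ : ℤ) - (b₂ : ℤ) := (hprim.zpow_eq_one_iff_dvd _).mp h
    have hne : (b₁ : ℤ) - (b₂ : ℤ) ≠ 0 := by
      intro h0; apply hbne; omega
    have := Int.le_of_dvd (abs_pos.mpr hne) ((dvd_abs _ _).mpr hdvd)
    have : |(b₁ : ℤ) - (b₂ : ℤ)| < N := by
      rw [abs_lt]; omega
    omega
  have hwN : w ^ N = 1 := by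
    rw [hw, ← zpow_natCast, ← zpow_mul, mul_comm, zpow_mul, hξN, one_zpow]
  have hgeom : ∑ j ∈ Finset.range N, w ^ j = 0 := by
    rw [geom_sum_eq hw1, hwN, sub_self, zero_div]
  apply Finset.sum_eq_zero
  intro i _
  have key : ∀ j : ℕ,
      ξ ^ ((a * ρ i + b₁) * j) *
        (starRingEnd ℂ) (ξ ^ ((a * ρ i + b₂) * ((j + τ) % N)))
      = ξ ^ (-(((a : ℤ) * ρ i + b₂) * τ)) * w ^ j := by
    intro j
    rw [hconj, ← zpow_natCast ξ ((a * ρ i + b₁) * j), ← zpow_add₀ hξ0]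
    rw [hw, ← zpow_natCast (ξ ^ ((b₁ : ℤ) - (b₂ : ℤ))) j, ← zpow_mul, ← zpow_add₀ hξ0]
    apply hmod
    have hdm : (N : ℤ) ∣ ((j + τ : ℤ) - (((j + τ) % N : ℕ) : ℤ)) := by
      refine ⟨(j + τ : ℤ) / N, ?_⟩
      have h1 : (((j + τ) % N : ℕ) : ℤ) = (j + τ : ℤ) % N := by push_cast; ring_nf
      have h2 := Int.mul_ediv_add_emod (j + τ : ℤ) N
      rw [h1]; linarith
    obtain ⟨k, hk⟩ := hdm
    refine ⟨((a : ℤ) * ρ i + b₂) * k, ?_⟩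
    push_cast at hk ⊢
    linear_combination ((a : ℤ) * (ρ i) + b₂) * hk
  calc ∑ j ∈ Finset.range N,
        ξ ^ ((a * ρ i + b₁) * j) *
          (starRingEnd ℂ) (ξ ^ ((a * ρ i + b₂) * ((j + τ) % N)))
      = ∑ j ∈ Finset.range N, ξ ^ (-(((a : ℤ) * ρ i + b₂) * τ)) * w ^ j := by
        exact Finset.sum_congr rfl fun j _ => key j
    _ = ξ ^ (-(((a : ℤ) * ρ i + b₂) * τ)) * ∑ j ∈ Finset.range N, w ^ j := by
        rw [Finset.mul_sum]
    _ = 0 := by rw [hgeom, mul_zero]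
end

section
/- Let N > 1 be odd, μ its smallest prime factor, ξ_N = e^{2πi/N}, ρ a bijection of [0,N−1]. For a_1 ≠ a_2 in [1,μ−1], b ∈ [0,N−1], and any τ ∈ [0,N−1], the arrays C^{a_1,b}, C^{a_2,b} with entries ξ_N^{(aρ(i)+b)j} satisfy |R_{C^{a_1,b},C^{a_2,b}}(τ)| = N. -/
/-- Cross-correlation of `C^{a₁,b}` and `C^{a₂,b}` (different `a`, same `b`) has
magnitude `N` at every shift `τ`. -/
theorem qcss_flexible_cross_same_b (N : ℕ) (hN : 1 < N) (hodd : Odd N)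
    (ρ : ℕ → ℕ) (hρ : Set.BijOn ρ (Set.Iio N) (Set.Iio N))
    (a₁ a₂ b τ : ℕ) (ha₁1 : 1 ≤ a₁) (ha₁2 : a₁ < N.minFac)
    (ha₂1 : 1 ≤ a₂) (ha₂2 : a₂ < N.minFac) (hane : a₁ ≠ a₂)
    (hb : b < N) (hτ : τ < N) :
    ‖(∑ i ∈ Finset.range N, ∑ j ∈ Finset.range N,
      Complex.exp (2 * Real.pi * Complex.I / N) ^ ((a₁ * ρ i + b) * j) *
        (starRingEnd ℂ)
          (Complex.exp (2 * Real.pi * Complex.I / N) ^ ((a₂ * ρ i + b) * ((j + τ) % N))))‖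
      = N := by
  have hNne : N ≠ 0 := by omega
  set ζ : ℂ := Complex.exp (2 * Real.pi * Complex.I / N) with hζdef
  have hζ : IsPrimitiveRoot ζ N := Complex.isPrimitiveRoot_exp N hNne
  have hζN : ζ ^ N = 1 := hζ.pow_eq_one
  have habs : ‖ζ‖ = 1 := by
    have := hζ.norm'_eq_one hNne
    simpa using this
  have hζne : ζ ≠ 0 := by
    intro h
    rw [h] at habs
    simp at habs
  have hconj : (starRingEnd ℂ) ζ = ζ ^ (N - 1) := by
    have h1 : ζ * ζ ^ (N - 1) = 1 := by
      rw [← pow_succ']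
      have : N - 1 + 1 = N := by omega
      rw [this, hζN]
    have h2 : ζ * (starRingEnd ℂ) ζ = 1 := by
      rw [Complex.mul_conj, ← Complex.sq_norm, habs]
      norm_num
    exact mul_left_cancel₀ hζne (h2.trans h1.symm)
  have hpowmod : ∀ x : ℕ, ζ ^ x = ζ ^ (x % N) := by
    intro x
    conv_lhs => rw [← Nat.div_add_mod x N]
    rw [pow_add, pow_mul, hζN, one_pow, one_mul]
  have hdd : Nat.Coprime ((a₁ : ℤ) - a₂).natAbs N := by
    set d := ((a₁ : ℤ) - a₂).natAbs with hd
    have hdpos : 0 < d := by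
      simp only [hd, Int.natAbs_pos]
      intro h; apply hane; omega
    have hdlt : d < N.minFac := by
      have := Int.natAbs_sub_le (a₁ : ℤ) a₂
      simp only [hd]; omega
    by_contra hcop
    obtain ⟨p, hp, hpd, hpN⟩ := Nat.Prime.not_coprime_iff_dvd.mp hcop
    have h1 : N.minFac ≤ p := Nat.minFac_le_of_dvd hp.two_le hpN
    have h2 : p ≤ d := Nat.le_of_dvd hdpos hpd
    omega
  have key : ∀ i ∈ Finset.range N,
      (∑ j ∈ Finset.range N, ζ ^ ((a₁ * ρ i + b) * j) *
        (starRingEnd ℂ) (ζ ^ ((a₂ * ρ i + b) * ((j + τ) % N)))) =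
      if ρ i = 0 then (N : ℂ) * ζ ^ ((N - 1) * (b * τ)) else 0 := by
    intro i hi
    have hρiN : ρ i < N := hρ.mapsTo (Set.mem_Iio.mpr (Finset.mem_range.mp hi))
    set A := a₁ * ρ i + b with hA
    set B := a₂ * ρ i + b with hB
    have hterm : ∀ j, ζ ^ (A * j) * (starRingEnd ℂ) (ζ ^ (B * ((j + τ) % N)))
        = (ζ ^ (A + (N - 1) * B)) ^ j * ζ ^ ((N - 1) * (B * τ)) := by
      intro j
      rw [map_pow, hconj, ← pow_mul, ← pow_mul, ← pow_add, ← pow_add]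
      rw [hpowmod (A * j + (N - 1) * (B * ((j + τ) % N))),
        hpowmod ((A + (N - 1) * B) * j + (N - 1) * (B * τ))]
      congr 1
      have hmq : (j + τ) % N ≡ j + τ [MOD N] := Nat.mod_modEq _ _
      have h1 : A * j + (N - 1) * (B * ((j + τ) % N)) ≡
          A * j + (N - 1) * (B * (j + τ)) [MOD N] :=
        Nat.ModEq.add_left _ (Nat.ModEq.mul_left _ (Nat.ModEq.mul_left _ hmq))
      have h2 : A * j + (N - 1) * (B * (j + τ)) =
          (A + (N - 1) * B) * j + (N - 1) * (B * τ) := by ring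
      rw [h2] at h1
      exact h1
    rw [Finset.sum_congr rfl (fun j _ => hterm j), ← Finset.sum_mul]
    have hdvd : N ∣ A + (N - 1) * B ↔ ρ i = 0 := by
      constructor
      · intro h
        have hz : (N : ℤ) ∣ (A : ℤ) + (N - 1) * B := by
          have := Int.natCast_dvd_natCast.mpr h
          push_cast at this ⊢
          convert this using 2
          have : (1 : ℤ) ≤ N := by exact_mod_cast hN.le
          push_cast [Nat.cast_sub (by omega : 1 ≤ N)]
          ring
        have hz2 : (N : ℤ) ∣ ((a₁ : ℤ) - a₂) * ρ i := by
          have heq : ((a₁ : ℤ) - a₂) * ρ i = ((A : ℤ) + ((N : ℤ) - 1) * B) - N * B := by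
            simp only [hA, hB]; push_cast; ring
          rw [heq]
          exact dvd_sub hz (dvd_mul_right _ _)
        have hz3 : N ∣ ((a₁ : ℤ) - a₂).natAbs * ρ i := by
          have := Int.natAbs_dvd_natAbs.mpr hz2
          simpa [Int.natAbs_mul] using this
        have hz4 : N ∣ ρ i := Nat.Coprime.dvd_of_dvd_mul_left hdd.symm hz3
        exact Nat.eq_zero_of_dvd_of_lt hz4 hρiN
      · intro h
        simp only [hA, hB, h, mul_zero, zero_add]
        have hle : b ≤ N * b := Nat.le_mul_of_pos_left b (by omega)
        have : b + (N - 1) * b = N * b := by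
          rw [Nat.sub_one_mul]; omega
        rw [this]
        exact Dvd.intro b rfl
    by_cases h0 : ρ i = 0
    · rw [if_pos h0]
      have hd : N ∣ A + (N - 1) * B := hdvd.mpr h0
      have hone : ζ ^ (A + (N - 1) * B) = 1 := (hζ.pow_eq_one_iff_dvd _).mpr hd
      rw [hone]
      simp [hB, h0, mul_comm]
    · rw [if_neg h0]
      have hd : ¬ N ∣ A + (N - 1) * B := fun h => h0 (hdvd.mp h)
      have hne1 : ζ ^ (A + (N - 1) * B) ≠ 1 := fun h => hd ((hζ.pow_eq_one_iff_dvd _).mp h)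
      rw [geom_sum_eq hne1]
      rw [← pow_mul, mul_comm (A + (N - 1) * B) N, pow_mul, hζN, one_pow]
      simp
  rw [Finset.sum_congr rfl key]
  obtain ⟨i₀, hi₀N, hρi₀⟩ := hρ.surjOn (Set.mem_Iio.mpr (by omega : (0:ℕ) < N))
  rw [Finset.sum_eq_single_of_mem i₀ (Finset.mem_range.mpr hi₀N)]
  · rw [if_pos hρi₀, norm_mul, norm_pow, habs, one_pow, mul_one, Complex.norm_natCast]
  · intro i hi hne
    rw [if_neg]
    intro h0
    exact hne (hρ.injOn (Set.mem_Iio.mpr (Finset.mem_range.mp hi)) hi₀N (h0.trans hρi₀.symm))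
end

section
/- Let N > 1 be odd with smallest prime factor μ, ξ_N = e^{2πi/N}, ρ a bijection of [0,N−1]. For a_1 ≠ a_2 in [1,μ−1], b_1 ≠ b_2 in [0,N−1], and any τ ∈ [0,N−1], the arrays C^{a_1,b_1}, C^{a_2,b_2} with entries ξ_N^{(aρ(i)+b)j} satisfy |R_{C^{a_1,b_1},C^{a_2,b_2}}(τ)| = N. -/
/-- Cross-correlation of `C^{a₁,b₁}` and `C^{a₂,b₂}` with `a₁ ≠ a₂` and `b₁ ≠ b₂`
has magnitude `N` at every shift `τ`. -/
theorem qcss_flexible_cross_general (N : ℕ) (hN : 1 < N) (hodd : Odd N)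
    (ρ : ℕ → ℕ) (hρ : Set.BijOn ρ (Set.Iio N) (Set.Iio N))
    (a₁ a₂ b₁ b₂ τ : ℕ) (ha₁1 : 1 ≤ a₁) (ha₁2 : a₁ < N.minFac)
    (ha₂1 : 1 ≤ a₂) (ha₂2 : a₂ < N.minFac) (hane : a₁ ≠ a₂)
    (hb₁ : b₁ < N) (hb₂ : b₂ < N) (hbne : b₁ ≠ b₂) (hτ : τ < N) :
    ‖(∑ i ∈ Finset.range N, ∑ j ∈ Finset.range N,
      Complex.exp (2 * Real.pi * Complex.I / N) ^ ((a₁ * ρ i + b₁) * j) *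
        (starRingEnd ℂ)
          (Complex.exp (2 * Real.pi * Complex.I / N) ^ ((a₂ * ρ i + b₂) * ((j + τ) % N))))‖
      = N := by
  haveI : NeZero N := ⟨by omega⟩
  set ζ := Complex.exp (2 * Real.pi * Complex.I / N) with hζdef
  have hζ : IsPrimitiveRoot ζ N := Complex.isPrimitiveRoot_exp N (by omega)
  have hζ0 : ζ ≠ 0 := hζ.ne_zero (by omega)
  have habs : ‖ζ‖ = 1 :=
    Complex.norm_eq_one_of_pow_eq_one hζ.pow_eq_one (by omega)
  have hζN : ζ ^ (N : ℤ) = 1 := by rw [zpow_natCast]; exact hζ.pow_eq_one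
  have hone : ∀ x : ℤ, ζ ^ x = 1 ↔ (N : ℤ) ∣ x := fun x => hζ.zpow_eq_one_iff_dvd x
  -- congruent exponents give equal powers
  have hcong : ∀ x y : ℤ, (N : ℤ) ∣ x - y → ζ ^ x = ζ ^ y := by
    intro x y ⟨c, hc⟩
    have : x = y + N * c := by linarith
    rw [this, zpow_add₀ hζ0, zpow_mul, hζN, one_zpow, mul_one]
  have hconj : ∀ m : ℕ, (starRingEnd ℂ) (ζ ^ m) = ζ ^ (-(m : ℤ)) := by
    intro m
    rw [map_pow, ← Complex.inv_eq_conj habs, zpow_neg, zpow_natCast, inv_pow]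
  -- rewrite each term as a single zpow with simplified exponent
  have hterm : ∀ i j : ℕ,
      ζ ^ ((a₁ * ρ i + b₁) * j) * (starRingEnd ℂ) (ζ ^ ((a₂ * ρ i + b₂) * ((j + τ) % N)))
      = ζ ^ ((((a₁ : ℤ) - a₂) * ρ i + ((b₁ : ℤ) - b₂)) * j)
        * ζ ^ (-(((a₂ : ℤ) * ρ i + b₂) * τ)) := by
    intro i j
    rw [hconj, ← zpow_natCast ζ ((a₁ * ρ i + b₁) * j), ← zpow_add₀ hζ0, ← zpow_add₀ hζ0]
    apply hcong
    have hmod : ((j : ℤ) + τ) - (((j + τ) % N : ℕ) : ℤ) = (N : ℤ) * (((j + τ) / N : ℕ) : ℤ) := by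
      have h := Nat.div_add_mod (j + τ) N
      have h' : ((j : ℤ) + τ) = (N : ℤ) * (((j + τ) / N : ℕ) : ℤ) + (((j + τ) % N : ℕ) : ℤ) := by
        exact_mod_cast h.symm
      linarith
    refine ⟨((a₂ : ℤ) * ρ i + b₂) * (((j + τ) / N : ℕ) : ℤ), ?_⟩
    push_cast at hmod ⊢
    linear_combination ((a₂ : ℤ) * ρ i + b₂) * hmod
  simp only [hterm]
  -- inner geometric sum
  have hinner : ∀ i : ℕ,
      (∑ j ∈ Finset.range N, ζ ^ ((((a₁ : ℤ) - a₂) * ρ i + ((b₁ : ℤ) - b₂)) * j)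
        * ζ ^ (-(((a₂ : ℤ) * ρ i + b₂) * τ)))
      = (if (N : ℤ) ∣ (((a₁ : ℤ) - a₂) * ρ i + ((b₁ : ℤ) - b₂)) then (N : ℂ) else 0)
        * ζ ^ (-(((a₂ : ℤ) * ρ i + b₂) * τ)) := by
    intro i
    rw [← Finset.sum_mul]
    congr 1
    set d : ℤ := ((a₁ : ℤ) - a₂) * ρ i + ((b₁ : ℤ) - b₂) with hd
    have hrw : ∀ j : ℕ, ζ ^ (d * j) = (ζ ^ d) ^ j := by
      intro j; rw [zpow_mul, zpow_natCast]
    simp only [hrw]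
    by_cases hdvd : (N : ℤ) ∣ d
    · rw [if_pos hdvd, (hone d).mpr hdvd]
      simp
    · rw [if_neg hdvd]
      have hne1 : ζ ^ d ≠ 1 := fun h => hdvd ((hone d).mp h)
      rw [geom_sum_eq hne1]
      have : (ζ ^ d) ^ N = 1 := by
        rw [← zpow_natCast (ζ ^ d), ← zpow_mul, mul_comm, zpow_mul, hζN, one_zpow]
      rw [this, sub_self, zero_div]
  simp only [hinner]
  -- set up the unique solution in ZMod N
  have hcop : Nat.Coprime ((a₁ : ℤ) - a₂).natAbs N := by
    have h1 : ((a₁ : ℤ) - a₂).natAbs < N.minFac := by omega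
    have h2 : ((a₁ : ℤ) - a₂).natAbs ≠ 0 := by omega
    by_contra h
    have hg2 : 2 ≤ Nat.gcd ((a₁ : ℤ) - a₂).natAbs N := by
      rcases Nat.eq_zero_or_pos (Nat.gcd ((a₁ : ℤ) - a₂).natAbs N) with h0 | h0
      · exact absurd (Nat.eq_zero_of_gcd_eq_zero_left h0) h2
      · omega
    have hle := Nat.minFac_le_of_dvd hg2 (Nat.gcd_dvd_right _ N)
    have := Nat.le_of_dvd (by omega) (Nat.gcd_dvd_left ((a₁ : ℤ) - a₂).natAbs N)
    omega
  have hu : IsUnit ((((a₁ : ℤ) - a₂ : ℤ) : ZMod N)) := by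
    have : IsCoprime ((a₁ : ℤ) - a₂) (N : ℤ) := by
      rw [Int.isCoprime_iff_gcd_eq_one]
      exact hcop
    obtain ⟨x, y, hxy⟩ := this
    apply IsUnit.of_mul_eq_one ((x : ℤ) : ZMod N)
    have h := congrArg (fun t : ℤ => (t : ZMod N)) hxy
    push_cast at h ⊢
    rw [ZMod.natCast_self] at h
    linear_combination h
  obtain ⟨v, hv⟩ := hu
  have hv' : (v : ZMod N) = (a₁ : ZMod N) - a₂ := by rw [hv]; push_cast; ring
  set x₀ : ZMod N := ↑v⁻¹ * ((b₂ : ZMod N) - b₁) with hx₀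
  -- characterize the divisibility condition
  have hcond : ∀ i : ℕ, i < N →
      (((N : ℤ) ∣ (((a₁ : ℤ) - a₂) * ρ i + ((b₁ : ℤ) - b₂))) ↔ ρ i = x₀.val) := by
    intro i hi
    have hρi : ρ i < N := hρ.mapsTo (Set.mem_Iio.mpr hi)
    rw [← ZMod.intCast_zmod_eq_zero_iff_dvd]
    push_cast
    constructor
    · intro h
      have h2 : ((a₁ : ZMod N) - a₂) * (ρ i : ZMod N) = (b₂ : ZMod N) - b₁ := by
        linear_combination h
      rw [← hv'] at h2
      have h3 : (ρ i : ZMod N) = x₀ := by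
        rw [hx₀, ← h2, ← mul_assoc, ← Units.val_mul, inv_mul_cancel, Units.val_one, one_mul]
      have := ZMod.val_cast_of_lt hρi
      rw [h3] at this
      omega
    · intro h
      have h3 : (ρ i : ZMod N) = x₀ := by
        rw [h, ZMod.natCast_val, ZMod.cast_id]
      rw [h3, hx₀, ← hv', ← mul_assoc, ← Units.val_mul, mul_inv_cancel, Units.val_one, one_mul]
      ring
  -- the unique index i₀
  obtain ⟨i₀, hi₀mem, hi₀⟩ := hρ.surjOn (Set.mem_Iio.mpr (ZMod.val_lt x₀))
  have hi₀N : i₀ < N := Set.mem_Iio.mp hi₀mem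
  rw [Finset.sum_eq_single_of_mem i₀ (Finset.mem_range.mpr hi₀N)]
  · rw [if_pos ((hcond i₀ hi₀N).mpr hi₀)]
    rw [norm_mul, norm_zpow, habs, one_zpow, mul_one, Complex.norm_natCast]
  · intro b hb hne
    rw [if_neg, zero_mul]
    intro hdvd
    have hbN : b < N := Finset.mem_range.mp hb
    have := (hcond b hbN).mp hdvd
    exact hne (hρ.injOn (Set.mem_Iio.mpr hbN) hi₀mem (this.trans hi₀.symm))
end

section
/- Let N > 1 be odd with smallest prime factor μ, ξ_N = e^{2πi/N}, and ρ a permutation of [0,N−1] fixing 0. Define the (N−1)×N arrays Ĉ^{a,b} with rows indexed by i ∈ [1,N−1] and (i,j)-entry ξ_N^{(aρ(i)+b)j}, for a ∈ [1,μ−1], b ∈ [0,N−1]. Then for any (a,b) and τ ∈ [1,N−1], |R_{Ĉ^{a,b},Ĉ^{a,b}}(τ)| = N. -/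
/-- Autocorrelation of the `(N-1) × N` array `Ĉ^{a,b}` (rows `i ∈ [1,N-1]`, entries
`ξ_N^{(aρ(i)+b)j}`) at a nonzero shift `τ` has magnitude `N`. -/
theorem qcss_deleted_autocorrelation (N : ℕ) (hN : 1 < N) (hodd : Odd N)
    (ρ : ℕ → ℕ) (hρ : Set.BijOn ρ (Set.Iio N) (Set.Iio N)) (hρ0 : ρ 0 = 0)
    (a b τ : ℕ) (ha1 : 1 ≤ a) (ha2 : a < N.minFac) (hb : b < N)
    (hτ1 : 1 ≤ τ) (hτ2 : τ < N) :
    ‖(∑ i ∈ Finset.Ico 1 N, ∑ j ∈ Finset.range N,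
      Complex.exp (2 * Real.pi * Complex.I / N) ^ ((a * ρ i + b) * j) *
        (starRingEnd ℂ)
          (Complex.exp (2 * Real.pi * Complex.I / N) ^ ((a * ρ i + b) * ((j + τ) % N))))‖
      = N := by
  have hNne : N ≠ 0 := by omega
  set ξ : ℂ := Complex.exp (2 * Real.pi * Complex.I / N) with hξdef
  have hprim : IsPrimitiveRoot ξ N := by
    have h := Complex.isPrimitiveRoot_exp N hNne
    convert h using 2
    try ring
  have hξN : ξ ^ N = 1 := hprim.pow_eq_one
  have hξ0 : ξ ≠ 0 := Complex.exp_ne_zero _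
  have habs : ‖ξ‖ = 1 := by
    exact Complex.norm_eq_one_of_pow_eq_one hξN hNne
  have hconj : (starRingEnd ℂ) ξ = ξ⁻¹ := (Complex.inv_eq_conj habs).symm
  -- inner sum computation
  have hinner : ∀ i, (∑ j ∈ Finset.range N,
      ξ ^ ((a * ρ i + b) * j) * (starRingEnd ℂ) (ξ ^ ((a * ρ i + b) * ((j + τ) % N))))
      = (N : ℂ) * (ξ⁻¹) ^ ((a * ρ i + b) * τ) := by
    intro i
    set m := a * ρ i + b
    set y := ξ ^ m with hy
    have hyN : y ^ N = 1 := by rw [hy, ← pow_mul, mul_comm, pow_mul, hξN, one_pow]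
    have hy0 : y ≠ 0 := pow_ne_zero _ hξ0
    have hterm : ∀ j, ξ ^ (m * j) * (starRingEnd ℂ) (ξ ^ (m * ((j + τ) % N)))
        = (ξ⁻¹) ^ (m * τ) := by
      intro j
      have h1 : ξ ^ (m * j) = y ^ j := by rw [hy, pow_mul]
      have h2 : ξ ^ (m * ((j + τ) % N)) = y ^ ((j + τ) % N) := by rw [hy, pow_mul]
      have h3 : y ^ ((j + τ) % N) = y ^ (j + τ) := (pow_eq_pow_mod (j + τ) hyN).symm
      have hcy : (starRingEnd ℂ) y = y⁻¹ := by rw [hy, map_pow, hconj, inv_pow]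
      have h4 : ξ⁻¹ ^ (m * τ) = (y ^ τ)⁻¹ := by rw [inv_pow, pow_mul]
      rw [h1, h2, h3, map_pow, hcy, h4, inv_pow, pow_add, mul_inv, ← mul_assoc,
        mul_inv_cancel₀ (pow_ne_zero _ hy0), one_mul]
    rw [Finset.sum_congr rfl (fun j _ => hterm j), Finset.sum_const, Finset.card_range,
      nsmul_eq_mul]
  have hsum : (∑ i ∈ Finset.Ico 1 N, ∑ j ∈ Finset.range N,
      ξ ^ ((a * ρ i + b) * j) * (starRingEnd ℂ) (ξ ^ ((a * ρ i + b) * ((j + τ) % N))))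
      = (N : ℂ) * (ξ⁻¹) ^ (b * τ) *
        ∑ i ∈ Finset.Ico 1 N, ((ξ⁻¹) ^ (a * τ)) ^ (ρ i) := by
    rw [Finset.mul_sum]
    refine Finset.sum_congr rfl fun i _ => ?_
    rw [hinner i]
    have : (a * ρ i + b) * τ = b * τ + (a * τ) * ρ i := by ring
    rw [this, pow_add, pow_mul]
    ring
  -- reindex by ρ
  have hreindex : (∑ i ∈ Finset.Ico 1 N, ((ξ⁻¹) ^ (a * τ)) ^ (ρ i))
      = ∑ x ∈ Finset.Ico 1 N, ((ξ⁻¹) ^ (a * τ)) ^ x := by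
    refine Finset.sum_bij (fun i _ => ρ i) ?_ ?_ ?_ ?_
    · intro i hi
      simp only [Finset.mem_Ico] at hi ⊢
      have hiN : i ∈ Set.Iio N := by simpa using hi.2
      have h1 : ρ i < N := hρ.mapsTo hiN
      have h2 : ρ i ≠ 0 := by
        intro h
        have : i = 0 := hρ.injOn hiN (by simp only [Set.mem_Iio]; omega) (by rw [h, hρ0])
        omega
      omega
    · intro i hi j hj h
      simp only [Finset.mem_Ico] at hi hj
      exact hρ.injOn (by simpa using hi.2) (by simpa using hj.2) h
    · intro y hy
      simp only [Finset.mem_Ico] at hy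
      obtain ⟨i, hiN, hiy⟩ := hρ.surjOn (a := y) (by simpa using hy.2)
      refine ⟨i, ?_, hiy⟩
      simp only [Finset.mem_Ico]
      have : i ≠ 0 := by
        intro h
        rw [h, hρ0] at hiy
        omega
      constructor
      · omega
      · simpa using hiN
    · intro i hi
      rfl
  -- geometric sum
  have hprim' : IsPrimitiveRoot ξ⁻¹ N := hprim.inv
  have hw1 : ((ξ⁻¹) ^ (a * τ)) ≠ 1 := by
    intro h
    have hdvd : N ∣ a * τ := hprim'.pow_eq_one_iff_dvd (a * τ) |>.mp h
    have hcop : Nat.Coprime a N := by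
      by_contra hc
      have hg1 : Nat.gcd a N ≠ 1 := hc
      have hg0 : Nat.gcd a N ≠ 0 := by
        intro h0
        have := Nat.eq_zero_of_gcd_eq_zero_right h0
        omega
      set p := (Nat.gcd a N).minFac with hp
      have hpp : p.Prime := Nat.minFac_prime hg1
      have hpa : p ∣ a := (Nat.minFac_dvd _).trans (Nat.gcd_dvd_left a N)
      have hpN : p ∣ N := (Nat.minFac_dvd _).trans (Nat.gcd_dvd_right a N)
      have h1 : N.minFac ≤ p := Nat.minFac_le_of_dvd hpp.two_le hpN
      have h2 : p ≤ a := Nat.le_of_dvd (by omega) hpa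
      omega
    have hdvd' : N ∣ τ * a := by rwa [mul_comm] at hdvd
    have : N ∣ τ := Nat.Coprime.dvd_of_dvd_mul_right hcop.symm hdvd'
    have := Nat.le_of_dvd (by omega) this
    omega
  have hwN : ((ξ⁻¹) ^ (a * τ)) ^ N = 1 := by
    rw [← pow_mul, mul_comm, pow_mul, hprim'.pow_eq_one, one_pow]
  have hgeom : (∑ x ∈ Finset.range N, ((ξ⁻¹) ^ (a * τ)) ^ x) = 0 := by
    have := geom_sum_eq hw1 N
    rw [this, hwN, sub_self, zero_div]
  have hsplit : (∑ x ∈ Finset.Ico 1 N, ((ξ⁻¹) ^ (a * τ)) ^ x) = -1 := by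
    have h0 : (∑ x ∈ Finset.range N, ((ξ⁻¹) ^ (a * τ)) ^ x)
        = ((ξ⁻¹) ^ (a * τ)) ^ 0 + ∑ x ∈ Finset.Ico 1 N, ((ξ⁻¹) ^ (a * τ)) ^ x := by
      rw [Finset.range_eq_Ico, ← Finset.sum_eq_sum_Ico_succ_bot (by omega)]
    rw [hgeom, pow_zero] at h0
    linear_combination -h0
  rw [hsum, hreindex, hsplit]
  rw [norm_mul, norm_mul, norm_pow, norm_inv, habs]
  simp
end

section
/- Let N > 1 be odd with smallest prime factor μ, and ρ a permutation of [0,N−1] with ρ(0)=0. For a_1 ≠ a_2 in [1,μ−1], b ∈ [0,N−1], and any τ ∈ [0,N−1], the (N−1)×N arrays Ĉ^{a_1,b}, Ĉ^{a_2,b} (rows i ∈ [1,N−1], entries ξ_N^{(aρ(i)+b)j}) satisfy R_{Ĉ^{a_1,b},Ĉ^{a_2,b}}(τ) = 0. -/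
/-- Cross-correlation of `Ĉ^{a₁,b}` and `Ĉ^{a₂,b}` (`a₁ ≠ a₂`, same `b`; rows
`i ∈ [1,N-1]`) vanishes at every shift `τ`. -/
theorem qcss_deleted_cross_same_b (N : ℕ) (hN : 1 < N) (hodd : Odd N)
    (ρ : ℕ → ℕ) (hρ : Set.BijOn ρ (Set.Iio N) (Set.Iio N)) (hρ0 : ρ 0 = 0)
    (a₁ a₂ b τ : ℕ) (ha₁1 : 1 ≤ a₁) (ha₁2 : a₁ < N.minFac)
    (ha₂1 : 1 ≤ a₂) (ha₂2 : a₂ < N.minFac) (hane : a₁ ≠ a₂)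
    (hb : b < N) (hτ : τ < N) :
    ∑ i ∈ Finset.Ico 1 N, ∑ j ∈ Finset.range N,
      Complex.exp (2 * Real.pi * Complex.I / N) ^ ((a₁ * ρ i + b) * j) *
        (starRingEnd ℂ)
          (Complex.exp (2 * Real.pi * Complex.I / N) ^ ((a₂ * ρ i + b) * ((j + τ) % N)))
      = 0 := by
  set ζ : ℂ := Complex.exp (2 * Real.pi * Complex.I / N) with hζdef
  have hN0 : N ≠ 0 := by omega
  have hprim : IsPrimitiveRoot ζ N := Complex.isPrimitiveRoot_exp N hN0
  have hζN : ζ ^ N = 1 := hprim.pow_eq_one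
  have hζ0 : ζ ≠ 0 := Complex.exp_ne_zero _
  have hconj : (starRingEnd ℂ) ζ = ζ⁻¹ := by
    rw [hζdef, ← Complex.exp_conj, ← Complex.exp_neg]
    congr 1
    simp [map_div₀, map_ofNat]
    ring
  have hinv : (ζ⁻¹) ^ N = 1 := by rw [inv_pow, hζN, inv_one]
  have hpow : ∀ m : ℕ, (ζ⁻¹) ^ m = (ζ⁻¹) ^ (m % N) := by
    intro m
    conv_lhs => rw [← Nat.mod_add_div m N]
    rw [pow_add, pow_mul, hinv, one_pow, mul_one]
  have hpow2 : ∀ m₁ m₂ : ℕ, m₁ % N = m₂ % N → (ζ⁻¹) ^ m₁ = (ζ⁻¹) ^ m₂ := by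
    intro m₁ m₂ h
    rw [hpow m₁, hpow m₂, h]
  have hcop : ∀ e : ℕ, 0 < e → e < N.minFac → Nat.Coprime e N := by
    intro e he1 he2
    by_contra h
    obtain ⟨p, hp, hpe, hpN⟩ := Nat.Prime.not_coprime_iff_dvd.mp h
    have h1 : N.minFac ≤ p := Nat.minFac_le_of_dvd hp.two_le hpN
    have h2 : p ≤ e := Nat.le_of_dvd he1 hpe
    omega
  apply Finset.sum_eq_zero
  intro i hi
  simp only [Finset.mem_Ico] at hi
  have hrlt : ρ i < N := by
    have := hρ.mapsTo (show i ∈ Set.Iio N by exact hi.2)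
    simpa using this
  have hrpos : 0 < ρ i := by
    rcases Nat.eq_zero_or_pos (ρ i) with h | h
    · exfalso
      have h0 : ρ i = ρ 0 := by rw [h, hρ0]
      have : i = 0 := hρ.injOn (show i ∈ Set.Iio N by exact hi.2)
        (show 0 ∈ Set.Iio N by simpa using Nat.pos_of_ne_zero hN0) h0
      omega
    · exact h
  set r := ρ i with hr
  -- key cancellation lemma
  have key : ∀ u v : ℕ, v < u → u < N.minFac → ζ ^ (u * r + b) ≠ ζ ^ (v * r + b) := by
    intro u v huv hu heq
    have hle : v * r ≤ u * r := Nat.mul_le_mul_right _ huv.le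
    have hsum : (u * r - v * r) + (v * r + b) = u * r + b := by
      rw [← add_assoc, Nat.sub_add_cancel hle]
    have hone : ζ ^ (u * r - v * r) = 1 := by
      have hmul : ζ ^ (u * r - v * r) * ζ ^ (v * r + b) = 1 * ζ ^ (v * r + b) := by
        rw [← pow_add, hsum, heq, one_mul]
      exact mul_right_cancel₀ (pow_ne_zero _ hζ0) hmul
    have hdvd : N ∣ (u - v) * r := by
      have := (hprim.pow_eq_one_iff_dvd _).mp (by rwa [← Nat.sub_mul] at hone)
      exact_mod_cast this
    have hcop' : Nat.Coprime (u - v) N := hcop (u - v) (by omega) (by omega)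
    have hNr : N ∣ r := (Nat.Coprime.dvd_of_dvd_mul_left
      (Nat.coprime_comm.mp hcop') hdvd)
    have := Nat.le_of_dvd hrpos hNr
    omega
  set w : ℂ := ζ ^ (a₁ * r + b) * (ζ⁻¹) ^ (a₂ * r + b) with hw
  have hwN : w ^ N = 1 := by
    rw [hw, mul_pow, ← pow_mul, ← pow_mul, mul_comm (a₁ * r + b) N,
      mul_comm (a₂ * r + b) N, pow_mul, pow_mul, hζN, hinv, one_pow, one_pow, one_mul]
  have hwne : w ≠ 1 := by
    intro h
    rw [hw, inv_pow, mul_inv_eq_one₀ (pow_ne_zero _ hζ0)] at h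
    rcases lt_trichotomy a₁ a₂ with h' | h' | h'
    · exact key a₂ a₁ h' ha₂2 h.symm
    · exact hane h'
    · exact key a₁ a₂ h' ha₁2 h
  have hterm : ∀ j ∈ Finset.range N,
      ζ ^ ((a₁ * r + b) * j) * (starRingEnd ℂ) (ζ ^ ((a₂ * r + b) * ((j + τ) % N)))
        = w ^ j * (ζ⁻¹) ^ ((a₂ * r + b) * τ) := by
    intro j _
    have hmod : (a₂ * r + b) * ((j + τ) % N) % N = (a₂ * r + b) * (j + τ) % N := by
      conv_rhs => rw [Nat.mul_mod]
      rw [Nat.mul_mod, Nat.mod_mod_of_dvd _ dvd_rfl]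
    rw [map_pow, hconj, hpow2 _ _ hmod, mul_add, pow_add, pow_mul, pow_mul,
      pow_mul ζ⁻¹ (a₂ * r + b) τ, hw, mul_pow]
    ring
  rw [Finset.sum_congr rfl hterm, ← Finset.sum_mul, geom_sum_eq hwne, hwN]
  simp
end

section
/- Let N > 1 be odd with smallest prime factor μ, and ρ a permutation of [0,N−1] with ρ(0)=0. For a_1 ≠ a_2 in [1,μ−1], b_1 ≠ b_2 in [0,N−1], and τ ∈ [0,N−1], the (N−1)×N arrays Ĉ^{a_1,b_1}, Ĉ^{a_2,b_2} satisfy |R(τ)| = N. -/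
/-- Cross-correlation of `Ĉ^{a₁,b₁}` and `Ĉ^{a₂,b₂}` (`a₁ ≠ a₂`, `b₁ ≠ b₂`; rows
`i ∈ [1,N-1]`) has magnitude `N` at every shift `τ`. -/
theorem qcss_deleted_cross_general (N : ℕ) (hN : 1 < N) (hodd : Odd N)
    (ρ : ℕ → ℕ) (hρ : Set.BijOn ρ (Set.Iio N) (Set.Iio N)) (hρ0 : ρ 0 = 0)
    (a₁ a₂ b₁ b₂ τ : ℕ) (ha₁1 : 1 ≤ a₁) (ha₁2 : a₁ < N.minFac)
    (ha₂1 : 1 ≤ a₂) (ha₂2 : a₂ < N.minFac) (hane : a₁ ≠ a₂)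
    (hb₁ : b₁ < N) (hb₂ : b₂ < N) (hbne : b₁ ≠ b₂) (hτ : τ < N) :
    ‖(∑ i ∈ Finset.Ico 1 N, ∑ j ∈ Finset.range N,
      Complex.exp (2 * Real.pi * Complex.I / N) ^ ((a₁ * ρ i + b₁) * j) *
        (starRingEnd ℂ)
          (Complex.exp (2 * Real.pi * Complex.I / N) ^ ((a₂ * ρ i + b₂) * ((j + τ) % N))))‖
      = N := by
  have hN0 : N ≠ 0 := by omega
  haveI : NeZero N := ⟨hN0⟩
  set ζ : ℂ := Complex.exp (2 * Real.pi * Complex.I / N) with hζdef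
  have hprim : IsPrimitiveRoot ζ N := Complex.isPrimitiveRoot_exp N hN0
  have hζN : ζ ^ N = 1 := hprim.pow_eq_one
  have habs : ‖ζ‖ = 1 := by
    rw [hζdef, show (2 * (Real.pi : ℂ) * Complex.I / N) =
      ((2 * Real.pi / N : ℝ) : ℂ) * Complex.I by push_cast; ring]
    exact Complex.norm_exp_ofReal_mul_I _
  have hconj : (starRingEnd ℂ) ζ = ζ ^ (N - 1) := by
    have hmul : ζ * ζ ^ (N - 1) = 1 := by
      have h : ζ ^ 1 * ζ ^ (N - 1) = ζ ^ N := by rw [← pow_add]; congr 1; omega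
      rw [pow_one] at h; rw [h, hζN]
    have hinv : ζ⁻¹ = ζ ^ (N - 1) := inv_eq_of_mul_eq_one_right hmul
    rw [← Complex.inv_eq_conj habs, hinv]
  have hconjpow : ∀ m : ℕ, (starRingEnd ℂ) (ζ ^ m) = ζ ^ ((N - 1) * m) := by
    intro m; rw [map_pow, hconj, ← pow_mul]
  have hmod : ∀ m : ℕ, ζ ^ m = ζ ^ (m % N) := by
    intro m
    conv_lhs => rw [← Nat.mod_add_div m N, pow_add, pow_mul, hζN, one_pow, mul_one]
  have hcong : ∀ a b : ℕ, a ≡ b [MOD N] → ζ ^ a = ζ ^ b := by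
    intro a b h; rw [hmod a, hmod b, h]
  have hgeom : ∀ ω : ℂ, ω ^ N = 1 →
      ∑ j ∈ Finset.range N, ω ^ j = if ω = 1 then (N : ℂ) else 0 := by
    intro ω hω
    split_ifs with h
    · simp [h]
    · rw [geom_sum_eq h, hω]; simp
  -- the unit u and target v in ZMod N
  set u : ZMod N := (a₁ : ZMod N) - (a₂ : ZMod N) with hu_def
  set v : ZMod N := (b₂ : ZMod N) - (b₁ : ZMod N) with hv_def
  have hu : IsUnit u := by
    have hd1 : ((a₁ : ℤ) - a₂).natAbs ≠ 0 := by omega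
    have hd2 : ((a₁ : ℤ) - a₂).natAbs < N.minFac := by omega
    have hcop : IsCoprime ((a₁ : ℤ) - a₂) (N : ℤ) := by
      rw [Int.isCoprime_iff_gcd_eq_one]
      have hgcd : Int.gcd ((a₁ : ℤ) - a₂) N = Nat.gcd ((a₁ : ℤ) - a₂).natAbs N := by
        simp [Int.gcd]
      by_contra h
      have hnc : ¬ Nat.Coprime ((a₁ : ℤ) - a₂).natAbs N := fun hc => h (hgcd ▸ hc)
      obtain ⟨p, hp, hpd, hpN⟩ := Nat.Prime.not_coprime_iff_dvd.mp hnc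
      have h1 := Nat.minFac_le_of_dvd hp.two_le hpN
      have h2 := Nat.le_of_dvd (by omega) hpd
      omega
    have hmap := hcop.map (Int.castRingHom (ZMod N))
    simp only [map_sub, map_natCast, Int.coe_castRingHom, ZMod.natCast_self] at hmap
    exact (isCoprime_zero_right.mp hmap)
  have hv : v ≠ 0 := by
    intro h
    rw [hv_def, sub_eq_zero] at h
    have := (ZMod.natCast_eq_natCast_iff b₂ b₁ N).mp h
    rw [Nat.ModEq, Nat.mod_eq_of_lt hb₂, Nat.mod_eq_of_lt hb₁] at this
    exact hbne this.symm
  set c : ZMod N := ((hu.unit⁻¹ : Units (ZMod N)) : ZMod N) * v with hc_def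
  have huc : u * c = v := by
    rw [hc_def, ← mul_assoc, IsUnit.mul_val_inv, one_mul]
  have hcancel : ∀ x : ZMod N, u * x = v ↔ x = c := by
    intro x
    constructor
    · intro h
      have h2 : u * x = u * c := by rw [h, huc]
      have := congrArg (fun t => ((hu.unit⁻¹ : Units (ZMod N)) : ZMod N) * t) h2
      simpa [← mul_assoc, IsUnit.val_inv_mul] using this
    · rintro rfl; exact huc
  have hc0 : c ≠ 0 := by
    intro h
    apply hv
    rw [← huc, h, mul_zero]
  set k : ℕ := c.val with hk_def
  have hk_lt : k < N := ZMod.val_lt c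
  have hkc : (k : ZMod N) = c := by
    rw [hk_def, ZMod.natCast_val, ZMod.cast_id]
  have hk0 : k ≠ 0 := by
    intro h
    apply hc0
    rw [← hkc, h, Nat.cast_zero]
  obtain ⟨i₀, hi₀mem, hρi₀⟩ := hρ.surjOn (Set.mem_Iio.mpr hk_lt)
  have hi₀ne : i₀ ≠ 0 := by
    intro h
    rw [h, hρ0] at hρi₀
    exact hk0 hρi₀.symm
  have hi₀Ico : i₀ ∈ Finset.Ico 1 N := by
    simp only [Finset.mem_Ico]
    exact ⟨by omega, hi₀mem⟩
  -- key per-row computation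
  have key : ∀ i ∈ Finset.Ico 1 N,
      (∑ j ∈ Finset.range N, ζ ^ ((a₁ * ρ i + b₁) * j) *
        (starRingEnd ℂ) (ζ ^ ((a₂ * ρ i + b₂) * ((j + τ) % N))))
      = if i = i₀ then (N : ℂ) * ζ ^ ((N - 1) * ((a₂ * ρ i + b₂) * τ)) else 0 := by
    intro i hi
    simp only [Finset.mem_Ico] at hi
    have hrlt : ρ i < N := hρ.mapsTo (Set.mem_Iio.mpr hi.2)
    set r := ρ i with hr_def
    set A := a₁ * r + b₁ with hA_def
    set B := a₂ * r + b₂ with hB_def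
    have step1 : ∀ j, ζ ^ (A * j) * (starRingEnd ℂ) (ζ ^ (B * ((j + τ) % N)))
        = ζ ^ ((N - 1) * (B * τ)) * (ζ ^ (A + (N - 1) * B)) ^ j := by
      intro j
      rw [hconjpow, ← pow_add, ← pow_mul, ← pow_add]
      apply hcong
      have h1 : (j + τ) % N ≡ j + τ [MOD N] := Nat.mod_modEq _ _
      have h2 : A * j + (N - 1) * (B * ((j + τ) % N)) ≡ A * j + (N - 1) * (B * (j + τ)) [MOD N] :=
        ((h1.mul_left B).mul_left (N - 1)).add_left _
      have h3 : A * j + (N - 1) * (B * (j + τ)) = (N - 1) * (B * τ) + (A + (N - 1) * B) * j := by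
        ring
      exact h2.trans (h3 ▸ Nat.ModEq.refl _)
    rw [Finset.sum_congr rfl (fun j _ => step1 j), ← Finset.mul_sum,
      hgeom _ (by rw [← pow_mul, mul_comm (A + (N - 1) * B) N, pow_mul, hζN, one_pow])]
    have hcast : ((A + (N - 1) * B : ℕ) : ZMod N) = u * (r : ZMod N) - v := by
      have hN1 : ((N - 1 : ℕ) : ZMod N) = -1 := by
        rw [Nat.cast_sub (by omega : 1 ≤ N), ZMod.natCast_self, Nat.cast_one]; ring
      rw [Nat.cast_add, Nat.cast_mul, hN1, hA_def, hB_def]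
      push_cast
      rw [hu_def, hv_def]
      ring
    have hiff : (ζ ^ (A + (N - 1) * B) = 1) ↔ i = i₀ := by
      rw [hprim.pow_eq_one_iff_dvd]
      constructor
      · intro hdvd
        have h0 : ((A + (N - 1) * B : ℕ) : ZMod N) = 0 := (ZMod.natCast_eq_zero_iff _ N).mpr hdvd
        rw [hcast, sub_eq_zero] at h0
        have hr_eq : (r : ZMod N) = c := (hcancel _).mp h0
        have : r = k := by
          have := congrArg ZMod.val hr_eq
          rwa [ZMod.val_cast_of_lt hrlt] at this
        exact hρ.injOn (Set.mem_Iio.mpr hi.2) hi₀mem (by rw [← hr_def, this, hρi₀])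
      · rintro rfl
        apply (ZMod.natCast_eq_zero_iff _ N).mp
        rw [hcast, sub_eq_zero]
        apply (hcancel _).mpr
        rw [hr_def, hρi₀, hkc]
    simp only [hiff]
    split_ifs with h
    · ring
    · ring
  rw [Finset.sum_congr rfl key, Finset.sum_ite_eq' _ i₀ _, if_pos hi₀Ico,
    norm_mul, norm_pow, habs, one_pow, mul_one, Complex.norm_natCast]
end
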